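/- (Proposition 2: individual predictive equivalence implies performance equivalence, finite-sample form.) Let m ≥ 1, let y_1,…,y_m ∈ {0,1} be binary outcomes, let π_1^A,…,π_m^A ∈ (0,1) and π_1^B,…,π_m^B ∈ (0,1) be two sets of predicted probabilities, and let ε_θ ≥ 0. Suppose the absolute log-odds ratio satisfies |logit(π_i^A) − logit(π_i^B)| ≤ ε_θ for every i = 1,…,m. Then the Brier scores BS^A = (1/m) Σ_{i=1}^m (y_i − π_i^A)² and BS^B = (1/m) Σ_{i=1}^m (y_i − π_i^B)² satisfy exp(−2ε_θ) · BS^B ≤ BS^A ≤ exp(2ε_θ) · BS^B. -/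
import Mathlib


/-- The logit function on `(0,1)`: `logit t = log (t / (1 - t))`. -/
noncomputable def logit (t : ℝ) : ℝ := Real.log (t / (1 - t))

lemma logit_eq {t : ℝ} (ht : t ∈ Set.Ioo (0 : ℝ) 1) :
    logit t = Real.log t - Real.log (1 - t) := by
  unfold logit
  rw [Real.log_div (ne_of_gt ht.1) (by linarith [ht.2])]

lemma key_ratio {a b ε : ℝ} (ha : a ∈ Set.Ioo (0 : ℝ) 1) (hb : b ∈ Set.Ioo (0 : ℝ) 1)
    (h : |logit a - logit b| ≤ ε) :
    a ≤ Real.exp ε * b ∧ 1 - a ≤ Real.exp ε * (1 - b) := by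
  have hε : 0 ≤ ε := le_trans (abs_nonneg _) h
  have h1 : logit a - logit b ≤ ε := le_trans (le_abs_self _) h
  have h2 : -(ε) ≤ logit a - logit b := neg_le_of_abs_le h
  rw [logit_eq ha, logit_eq hb] at h1 h2
  constructor
  · -- a ≤ exp ε * b, from log a ≤ log b + ε
    have hlog : Real.log a ≤ Real.log b + ε := by
      rcases le_or_gt a b with hab | hab
      · have := Real.log_le_log ha.1 hab
        linarith
      · have : Real.log (1 - a) ≤ Real.log (1 - b) :=
          Real.log_le_log (by linarith [ha.2]) (by linarith)
        linarith
    calc a = Real.exp (Real.log a) := (Real.exp_log ha.1).symm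
      _ ≤ Real.exp (Real.log b + ε) := Real.exp_le_exp.mpr hlog
      _ = Real.exp ε * b := by rw [Real.exp_add, Real.exp_log hb.1]; ring
  · have hlog : Real.log (1 - a) ≤ Real.log (1 - b) + ε := by
      rcases le_or_gt a b with hab | hab
      · have : Real.log a ≤ Real.log b := Real.log_le_log ha.1 hab
        linarith
      · have : Real.log (1 - a) ≤ Real.log (1 - b) :=
          Real.log_le_log (by linarith [ha.2]) (by linarith)
        linarith
    calc 1 - a = Real.exp (Real.log (1 - a)) := (Real.exp_log (by linarith [ha.2])).symm
      _ ≤ Real.exp (Real.log (1 - b) + ε) := Real.exp_le_exp.mpr hlog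
      _ = Real.exp ε * (1 - b) := by
          rw [Real.exp_add, Real.exp_log (by linarith [hb.2])]; ring

lemma key_sq {a b ε y : ℝ} (ha : a ∈ Set.Ioo (0 : ℝ) 1) (hb : b ∈ Set.Ioo (0 : ℝ) 1)
    (hy : y = 0 ∨ y = 1) (h : |logit a - logit b| ≤ ε) :
    (y - a) ^ 2 ≤ Real.exp (2 * ε) * (y - b) ^ 2 := by
  obtain ⟨h1, h2⟩ := key_ratio ha hb h
  have he : Real.exp (2 * ε) = Real.exp ε * Real.exp ε := by
    rw [← Real.exp_add]; ring_nf
  rcases hy with rfl | rfl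
  · have hb0 := hb.1
    have ha0 := ha.1
    nlinarith [Real.exp_pos ε, mul_pos (Real.exp_pos ε) hb.1]
  · have : 1 - a ≤ Real.exp ε * (1 - b) := h2
    nlinarith [Real.exp_pos ε, ha.2, hb.2,
      mul_pos (Real.exp_pos ε) (show (0:ℝ) < 1 - b by linarith [hb.2])]

/-- **Proposition 2, finite-sample form.** Individual predictive equivalence
implies performance equivalence: if the absolute log-odds ratio between two sets of predicted
probabilities is at most `ε_θ` for every observation, then the corresponding Brier scores
satisfy `exp(−2ε_θ)·BS^B ≤ BS^A ≤ exp(2ε_θ)·BS^B`. -/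
theorem individual_predictive_equiv_implies_performance_equiv
    {m : ℕ} (hm : 1 ≤ m) (y : Fin m → ℝ) (hy : ∀ i, y i = 0 ∨ y i = 1)
    (πA πB : Fin m → ℝ)
    (hπA : ∀ i, πA i ∈ Set.Ioo (0 : ℝ) 1) (hπB : ∀ i, πB i ∈ Set.Ioo (0 : ℝ) 1)
    (εθ : ℝ) (hεθ : 0 ≤ εθ) (h : ∀ i, |logit (πA i) - logit (πB i)| ≤ εθ) :
    Real.exp (-2 * εθ) * ((1 / (m : ℝ)) * ∑ i, (y i - πB i) ^ 2) ≤
        (1 / (m : ℝ)) * ∑ i, (y i - πA i) ^ 2 ∧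
      (1 / (m : ℝ)) * ∑ i, (y i - πA i) ^ 2 ≤
        Real.exp (2 * εθ) * ((1 / (m : ℝ)) * ∑ i, (y i - πB i) ^ 2) := by
  have hm0 : (0:ℝ) ≤ 1 / (m : ℝ) := by positivity
  have hAB : ∀ i, (y i - πA i) ^ 2 ≤ Real.exp (2 * εθ) * (y i - πB i) ^ 2 := fun i =>
    key_sq (hπA i) (hπB i) (hy i) (h i)
  have hBA : ∀ i, (y i - πB i) ^ 2 ≤ Real.exp (2 * εθ) * (y i - πA i) ^ 2 := fun i => by
    have := h i
    rw [abs_sub_comm] at this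
    exact key_sq (hπB i) (hπA i) (hy i) this
  have sumAB : ∑ i, (y i - πA i) ^ 2 ≤ Real.exp (2 * εθ) * ∑ i, (y i - πB i) ^ 2 := by
    rw [Finset.mul_sum]
    exact Finset.sum_le_sum fun i _ => hAB i
  have sumBA : ∑ i, (y i - πB i) ^ 2 ≤ Real.exp (2 * εθ) * ∑ i, (y i - πA i) ^ 2 := by
    rw [Finset.mul_sum]
    exact Finset.sum_le_sum fun i _ => hBA i
  constructor
  · have : Real.exp (-2 * εθ) * ∑ i, (y i - πB i) ^ 2 ≤ ∑ i, (y i - πA i) ^ 2 := by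
      have hpos : (0:ℝ) < Real.exp (2 * εθ) := Real.exp_pos _
      rw [show (-2 : ℝ) * εθ = -(2 * εθ) by ring, Real.exp_neg]
      rw [inv_mul_le_iff₀ hpos] at *
      linarith [sumBA]
    calc Real.exp (-2 * εθ) * ((1 / (m : ℝ)) * ∑ i, (y i - πB i) ^ 2)
        = (1 / (m : ℝ)) * (Real.exp (-2 * εθ) * ∑ i, (y i - πB i) ^ 2) := by ring
      _ ≤ (1 / (m : ℝ)) * ∑ i, (y i - πA i) ^ 2 := by
          exact mul_le_mul_of_nonneg_left this hm0
  · calc (1 / (m : ℝ)) * ∑ i, (y i - πA i) ^ 2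
        ≤ (1 / (m : ℝ)) * (Real.exp (2 * εθ) * ∑ i, (y i - πB i) ^ 2) :=
          mul_le_mul_of_nonneg_left sumAB hm0
      _ = Real.exp (2 * εθ) * ((1 / (m : ℝ)) * ∑ i, (y i - πB i) ^ 2) := by ring
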